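/- arXiv:2307.04679 — 2 statements merged into one kernel-verified Lean document; each statement's English description precedes it below -/
import Mathlib

section
/- Let L : ℝᵈ → ℝ be L-smooth (gradient L-Lipschitz) and satisfy the μ-PL condition with L ≥ μ > 0, and let L* = inf L. Suppose iterates satisfy x_{t+1} = x_t - (1/L) g_t where E[‖∇L(x_t) - g_t‖² | x_t] ≤ σ². Then E[L(x_T) - L*] ≤ (1 - μ/L)^T (L(x_0) - L*) + σ²/(2μ). -/
open MeasureTheory
open scoped RealInnerProductSpace

/-!
Along the step `x - g/L`, smoothness and the PL inequality give pointwise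
`f(x⁺) - L* ≤ (1 - μ/L)(f(x) - L*) + ‖∇f(x) - g‖²/(2L)`. Taking expectations, the tower property
bounds the noise term by `σ²/(2L)`, and unrolling the resulting affine recursion leaves the
geometric term plus its fixed point `σ²/(2μ)`.
-/

section Descent

variable {E : Type*} [NormedAddCommGroup E] [InnerProductSpace ℝ E]

-- Completing the square: `‖g‖² - 2⟪∇f, g⟫ = ‖∇f - g‖² - ‖∇f‖²`.
lemma le_sub_add_of_smooth_step {f : E → ℝ} {f' : E → E} {L : ℝ} (hL : 0 < L)
    (hsmooth : ∀ u v, f v ≤ f u + ⟪f' u, v - u⟫ + L / 2 * ‖v - u‖ ^ 2) (u g : E) :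
    f (u - L⁻¹ • g) ≤ f u - ‖f' u‖ ^ 2 / (2 * L) + ‖f' u - g‖ ^ 2 / (2 * L) := by
  have h := hsmooth u (u - L⁻¹ • g)
  rw [sub_sub_cancel_left, inner_neg_right, real_inner_smul_right, norm_neg, norm_smul,
    Real.norm_of_nonneg (inv_nonneg.2 hL.le)] at h
  rw [norm_sub_sq_real]
  calc f (u - L⁻¹ • g) ≤ _ := h
    _ = _ := by field_simp; ring

lemma sub_le_of_smooth_of_pl {f : E → ℝ} {f' : E → E} {μ L Lstar : ℝ} (hL : 0 < L)
    (hsmooth : ∀ u v, f v ≤ f u + ⟪f' u, v - u⟫ + L / 2 * ‖v - u‖ ^ 2)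
    (hPL : ∀ u, 2 * μ * (f u - Lstar) ≤ ‖f' u‖ ^ 2) (u g : E) :
    f (u - L⁻¹ • g) - Lstar ≤
      (1 - μ / L) * (f u - Lstar) + ‖f' u - g‖ ^ 2 / (2 * L) := by
  have hstep := le_sub_add_of_smooth_step hL hsmooth u g
  have hpl : μ / L * (f u - Lstar) ≤ ‖f' u‖ ^ 2 / (2 * L) := by
    rw [div_mul_eq_mul_div, div_le_div_iff₀ hL (by positivity)]
    nlinarith [hPL u]
  linarith

end Descent

lemma integral_le_of_ae_condExp_le {Ω : Type*} {m m₀ : MeasurableSpace Ω} {P : Measure Ω}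
    [IsProbabilityMeasure P] (hm : m ≤ m₀) {h : Ω → ℝ} {c : ℝ} (hle : ∀ᵐ ω ∂P, P[h | m] ω ≤ c) :
    ∫ ω, h ω ∂P ≤ c := by
  rw [← integral_condExp hm]
  simpa using integral_mono_ae integrable_condExp (integrable_const c) hle

lemma le_pow_mul_add_of_le_mul_add {e : ℕ → ℝ} {ρ b c : ℝ} (hρ : 0 ≤ ρ) (hc : 0 ≤ c)
    (hfix : ρ * c + b ≤ c) (hstep : ∀ t, e (t + 1) ≤ ρ * e t + b) (T : ℕ) :
    e T ≤ ρ ^ T * e 0 + c := by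
  induction T with
  | zero => simpa using hc
  | succ T ih =>
    calc e (T + 1) ≤ ρ * e T + b := hstep T
      _ ≤ ρ * (ρ ^ T * e 0 + c) + b := by gcongr
      _ ≤ ρ ^ (T + 1) * e 0 + c := by rw [pow_succ]; linarith

theorem stmt_12_general {Ω : Type*} [MeasurableSpace Ω] (P : Measure Ω) [IsProbabilityMeasure P]
    {d : ℕ} (μ L σ Lstar : ℝ) (hμ : 0 < μ) (hμL : μ ≤ L)
    (f : EuclideanSpace ℝ (Fin d) → ℝ)
    (f' : EuclideanSpace ℝ (Fin d) → EuclideanSpace ℝ (Fin d))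
    (hsmooth : ∀ u v, f v ≤ f u + ⟪f' u, v - u⟫ + L / 2 * ‖v - u‖ ^ 2)
    (hPL : ∀ u, 2 * μ * (f u - Lstar) ≤ ‖f' u‖ ^ 2)
    (x g : ℕ → Ω → EuclideanSpace ℝ (Fin d))
    (hxmeas : ∀ t, Measurable (x t))
    (hupdate : ∀ t ω, x (t + 1) ω = x t ω - (1 / L) • g t ω)
    (hnoise : ∀ t, ∀ᵐ ω ∂P,
      (P[fun ω' => ‖f' (x t ω') - g t ω'‖ ^ 2 | MeasurableSpace.comap (x t) inferInstance]) ω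
        ≤ σ ^ 2)
    (hfint : ∀ t, Integrable (fun ω => f (x t ω)) P)
    (hnint : ∀ t, Integrable (fun ω => ‖f' (x t ω) - g t ω‖ ^ 2) P) :
    ∀ T : ℕ, (∫ ω, f (x T ω) ∂P) - Lstar ≤
      (1 - μ / L) ^ T * ((∫ ω, f (x 0 ω) ∂P) - Lstar) + σ ^ 2 / (2 * μ) := by
  have hL : 0 < L := hμ.trans_le hμL
  refine le_pow_mul_add_of_le_mul_add (b := σ ^ 2 / (2 * L))
    (sub_nonneg.2 ((div_le_one hL).2 hμL)) (by positivity) (le_of_eq (by field_simp; ring)) ?_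
  intro t
  have hpoint (ω : Ω) : f (x (t + 1) ω) - Lstar ≤
      (1 - μ / L) * (f (x t ω) - Lstar) + ‖f' (x t ω) - g t ω‖ ^ 2 / (2 * L) := by
    rw [hupdate, one_div]
    exact sub_le_of_smooth_of_pl hL hsmooth hPL (x t ω) (g t ω)
  have hnoise_int : ∫ ω, ‖f' (x t ω) - g t ω‖ ^ 2 ∂P ≤ σ ^ 2 :=
    integral_le_of_ae_condExp_le (hxmeas t).comap_le (hnoise t)
  have hgap : Integrable (fun ω => (1 - μ / L) * (f (x t ω) - Lstar)) P :=
    ((hfint t).sub (integrable_const _)).const_mul _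
  have hbound : Integrable (fun ω => (1 - μ / L) * (f (x t ω) - Lstar) +
      ‖f' (x t ω) - g t ω‖ ^ 2 / (2 * L)) P := hgap.add ((hnint t).div_const _)
  have hmono : ∫ ω, (f (x (t + 1) ω) - Lstar) ∂P ≤ ∫ ω, ((1 - μ / L) * (f (x t ω) - Lstar) +
      ‖f' (x t ω) - g t ω‖ ^ 2 / (2 * L)) ∂P :=
    integral_mono ((hfint (t + 1)).sub (integrable_const _)) hbound hpoint
  rw [integral_sub (hfint (t + 1)) (integrable_const _),
    integral_add hgap ((hnint t).div_const _), integral_const_mul,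
    integral_sub (hfint t) (integrable_const _), integral_div] at hmono
  simp only [integral_const, probReal_univ, one_smul] at hmono
  have hnoise_scaled : (∫ ω, ‖f' (x t ω) - g t ω‖ ^ 2 ∂P) / (2 * L) ≤ σ ^ 2 / (2 * L) := by
    gcongr
  linarith

theorem stmt_12 {Ω : Type*} [MeasurableSpace Ω] (P : Measure Ω) [IsProbabilityMeasure P]
    {d : ℕ} (μ L σ Lstar : ℝ) (hμ : 0 < μ) (hμL : μ ≤ L)
    (f : EuclideanSpace ℝ (Fin d) → ℝ)
    (f' : EuclideanSpace ℝ (Fin d) → EuclideanSpace ℝ (Fin d))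
    (hsmooth : ∀ u v, f v ≤ f u + ⟪f' u, v - u⟫ + L / 2 * ‖v - u‖ ^ 2)
    (hPL : ∀ u, 2 * μ * (f u - Lstar) ≤ ‖f' u‖ ^ 2)
    (hLstar : Lstar = ⨅ u, f u)
    (x g : ℕ → Ω → EuclideanSpace ℝ (Fin d))
    (hxmeas : ∀ t, Measurable (x t)) (hgmeas : ∀ t, Measurable (g t))
    (hupdate : ∀ t ω, x (t + 1) ω = x t ω - (1 / L) • g t ω)
    (hnoise : ∀ t, ∀ᵐ ω ∂P,
      (P[fun ω' => ‖f' (x t ω') - g t ω'‖ ^ 2 | MeasurableSpace.comap (x t) inferInstance]) ω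
        ≤ σ ^ 2)
    (hfint : ∀ t, Integrable (fun ω => f (x t ω)) P)
    (hnint : ∀ t, Integrable (fun ω => ‖f' (x t ω) - g t ω‖ ^ 2) P) :
    ∀ T : ℕ, (∫ ω, f (x T ω) ∂P) - Lstar ≤
      (1 - μ / L) ^ T * ((∫ ω, f (x 0 ω) ∂P) - Lstar) + σ ^ 2 / (2 * μ) :=
  stmt_12_general P μ L σ Lstar hμ hμL f f' hsmooth hPL x g hxmeas hupdate hnoise hfint hnint
end

section
/- Let L : ℝᵈ → ℝ be L-smooth and μ-PL with κ = L/μ, and let iterates satisfy the one-step inequality E[L(x_{t+1}) - L*] ≤ (1 - 1/κ) E[L(x_t) - L*] + σ_t²/(2L), where σ_t² ≤ a + b/n_t with batch sizes n_t = ⌈n(1-c)c^{T-t-1}/2⌉, c = √(1 - 1/κ), T = ⌊n/2⌋, and n ≥ 3. Then E[L(x_T) - L*] ≤ a/(2μ) + 6κb/(μn) + Δ e^{-n/(6κ)}, where Δ = E[L(x_0) - L*]. -/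
/-!
Unrolling the one-step inequality with contraction factor `1 - 1/κ = c²` bounds `e T` by
`c^(2T) e 0 + ∑_t c^(2(T-1-t)) σ_t² / (2L)`. The `a`-part of the variance contributes at most
`κ a / (2L) = a / (2μ)`. The batch sizes are chosen so that `c^(2s) / n_t ≤ 2 c^s / (n (1-c))` for
`s = T-1-t`, so the `b`-part is a geometric series in `c`, at most `2 / (n (1-c)²) ≤ 8κ² / n` since
`1 - c ≥ 1/(2κ)`. Finally `c^(2T) ≤ exp (-T/κ)` and `T = ⌊n/2⌋ ≥ n/6`.
-/

open Finset Real

theorem le_pow_mul_add_sum_of_le_mul_add {R : Type*} [CommSemiring R] [PartialOrder R]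
    [IsOrderedRing R] {q : R} (hq : 0 ≤ q) {e u : ℕ → R} {T : ℕ}
    (h : ∀ t < T, e (t + 1) ≤ q * e t + u t) :
    e T ≤ q ^ T * e 0 + ∑ t ∈ range T, q ^ (T - 1 - t) * u t := by
  induction T with
  | zero => simp
  | succ T ih =>
    have hq_mul : ∀ t ∈ range T, q * (q ^ (T - 1 - t) * u t) = q ^ (T + 1 - 1 - t) * u t := by
      intro t ht
      rw [← mul_assoc, ← pow_succ']
      congr 2
      have := mem_range.1 ht
      omega
    calc e (T + 1) ≤ q * e T + u T := h T T.lt_succ_self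
      _ ≤ q * (q ^ T * e 0 + ∑ t ∈ range T, q ^ (T - 1 - t) * u t) + u T := by
        gcongr
        exact ih fun t ht => h t (ht.trans T.lt_succ_self)
      _ = q ^ (T + 1) * e 0 + ∑ t ∈ range (T + 1), q ^ (T + 1 - 1 - t) * u t := by
        rw [sum_range_succ, mul_add, mul_sum, sum_congr rfl hq_mul]
        simp only [Nat.add_sub_cancel, Nat.sub_self, pow_zero, one_mul, pow_succ']
        ring

theorem sum_range_pow_le_one_div_one_sub {K : Type*} [Field K] [LinearOrder K]
    [IsStrictOrderedRing K] {x : K} (hx₀ : 0 ≤ x) (hx₁ : x < 1) (n : ℕ) :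
    ∑ i ∈ range n, x ^ i ≤ 1 / (1 - x) := by
  have := geom_sum_Ico_le_of_lt_one (m := 0) (n := n) hx₀ hx₁
  rwa [pow_zero, ← range_eq_Ico] at this

theorem sq_pow_div_ceil_le {c x : ℝ} (hc : 0 ≤ c) (hx : 0 < x) (s : ℕ) :
    (c ^ 2) ^ s / ⌈x * c ^ s⌉₊ ≤ c ^ s / x := by
  rw [← pow_mul, mul_comm, pow_mul, sq]
  rcases (pow_nonneg hc s).eq_or_lt with hcs | hcs
  · -- the ceiling is `0` here as well, and both sides are `0`
    simp [← hcs]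
  · have hpos : 0 < x * c ^ s := mul_pos hx hcs
    calc c ^ s * c ^ s / ⌈x * c ^ s⌉₊ ≤ c ^ s * c ^ s / (x * c ^ s) := by
          gcongr
          exact Nat.le_ceil _
      _ = c ^ s / x := by field_simp

theorem sum_sq_pow_div_ceil_le {c x : ℝ} (hc₀ : 0 ≤ c) (hc₁ : c < 1) (hx : 0 < x) (T : ℕ) :
    ∑ s ∈ range T, (c ^ 2) ^ s / ⌈x * c ^ s⌉₊ ≤ 1 / (x * (1 - c)) :=
  calc ∑ s ∈ range T, (c ^ 2) ^ s / ⌈x * c ^ s⌉₊ ≤ ∑ s ∈ range T, c ^ s / x :=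
        sum_le_sum fun s _ => sq_pow_div_ceil_le hc₀ hx s
    _ = (∑ s ∈ range T, c ^ s) / x := by rw [sum_div]
    _ ≤ 1 / (1 - c) / x := by gcongr; exact sum_range_pow_le_one_div_one_sub hc₀ hc₁ T
    _ = 1 / (x * (1 - c)) := by rw [div_div, mul_comm]

theorem sum_sq_pow_mul_le_of_le_add_div_ceil {c x a b : ℝ} (hc₀ : 0 ≤ c) (hc₁ : c < 1) (hx : 0 < x)
    (ha : 0 ≤ a) (hb : 0 ≤ b) {T : ℕ} {m : ℕ → ℕ} (hm : ∀ t < T, m t = ⌈x * c ^ (T - 1 - t)⌉₊)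
    {v : ℕ → ℝ} (hv : ∀ t < T, v t ≤ a + b / m t) :
    ∑ t ∈ range T, (c ^ 2) ^ (T - 1 - t) * v t ≤ a / (1 - c ^ 2) + b / (x * (1 - c)) :=
  calc ∑ t ∈ range T, (c ^ 2) ^ (T - 1 - t) * v t
      ≤ ∑ t ∈ range T, (a * (c ^ 2) ^ (T - 1 - t) +
          b * ((c ^ 2) ^ (T - 1 - t) / ⌈x * c ^ (T - 1 - t)⌉₊)) := by
        refine sum_le_sum fun t ht => ?_
        have ht := mem_range.1 ht
        calc (c ^ 2) ^ (T - 1 - t) * v t ≤ (c ^ 2) ^ (T - 1 - t) * (a + b / m t) := by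
              gcongr; exact hv t ht
          _ = _ := by rw [hm t ht]; ring
    _ = a * ∑ s ∈ range T, (c ^ 2) ^ s + b * ∑ s ∈ range T, (c ^ 2) ^ s / ⌈x * c ^ s⌉₊ := by
        rw [sum_add_distrib, ← mul_sum, ← mul_sum, sum_range_reflect (fun s => (c ^ 2) ^ s),
          sum_range_reflect (fun s => (c ^ 2) ^ s / (⌈x * c ^ s⌉₊ : ℝ))]
    _ ≤ a * (1 / (1 - c ^ 2)) + b * (1 / (x * (1 - c))) := by
        gcongr
        · exact sum_range_pow_le_one_div_one_sub (sq_nonneg c) (by nlinarith) T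
        · exact sum_sq_pow_div_ceil_le hc₀ hc₁ hx T
    _ = a / (1 - c ^ 2) + b / (x * (1 - c)) := by rw [mul_one_div, mul_one_div]

theorem one_le_two_mul_mul_one_sub_sqrt_one_sub_inv {κ : ℝ} (hκ : 1 / 2 ≤ κ) :
    1 ≤ 2 * κ * (1 - √(1 - 1 / κ)) := by
  have hκ₀ : 0 < κ := by linarith
  have hsq : (1 - 1 / (2 * κ)) ^ 2 = 1 - 1 / κ + (1 / (2 * κ)) ^ 2 := by field_simp; ring
  have hsqrt : √(1 - 1 / κ) ≤ 1 - 1 / (2 * κ) :=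
    sqrt_le_iff.2 ⟨sub_nonneg.2 ((div_le_one (by linarith)).2 (by linarith)),
      by rw [hsq]; linarith [sq_nonneg (1 / (2 * κ))]⟩
  calc 1 = 2 * κ * (1 - (1 - 1 / (2 * κ))) := by field_simp; ring
    _ ≤ 2 * κ * (1 - √(1 - 1 / κ)) := by gcongr

theorem one_sub_pow_le_exp_neg_mul {x : ℝ} (hx : x ≤ 1) (n : ℕ) :
    (1 - x) ^ n ≤ exp (-(n * x)) := by
  rw [← mul_neg, exp_nat_mul]
  exact pow_le_pow_left₀ (sub_nonneg.2 hx) (one_sub_le_exp_neg x) n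

theorem one_sub_inv_pow_div_two_le_exp {κ : ℝ} (hκ : 1 ≤ κ) {n : ℕ} (hn : 2 ≤ n) :
    (1 - 1 / κ) ^ (n / 2) ≤ exp (-(n : ℝ) / (6 * κ)) := by
  have hκ₀ : 0 < κ := one_pos.trans_le hκ
  refine (one_sub_pow_le_exp_neg_mul ((div_le_one hκ₀).2 hκ) _).trans (exp_le_exp.2 ?_)
  have : (n : ℝ) ≤ 6 * (n / 2 : ℕ) := by exact_mod_cast (by omega : n ≤ 6 * (n / 2))
  rw [neg_div, neg_le_neg_iff, div_le_iff₀ (by positivity)]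
  field_simp
  linarith

theorem stmt_13 (μ L a b : ℝ) (hμ : 0 < μ) (hμL : μ ≤ L) (ha : 0 ≤ a) (hb : 0 ≤ b)
    (n : ℕ) (hn : 3 ≤ n)
    (κ : ℝ) (hκ : κ = L / μ)
    (c : ℝ) (hc : c = Real.sqrt (1 - 1 / κ))
    (T : ℕ) (hT : T = n / 2)
    (nt : ℕ → ℕ) (hnt : ∀ t, nt t = ⌈(n : ℝ) * (1 - c) * c ^ (T - t - 1) / 2⌉₊)
    (e : ℕ → ℝ) (he : ∀ t, 0 ≤ e t)
    (σ2 : ℕ → ℝ) (hσ2 : ∀ t < T, σ2 t ≤ a + b / (nt t : ℝ))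
    (hstep : ∀ t < T, e (t + 1) ≤ (1 - 1 / κ) * e t + σ2 t / (2 * L)) :
    e T ≤ a / (2 * μ) + 6 * κ * b / (μ * n) + e 0 * Real.exp (-(n : ℝ) / (6 * κ)) := by
  have hκ₁ : 1 ≤ κ := by rw [hκ, le_div_iff₀ hμ]; linarith
  have hκ₀ : 0 < κ := one_pos.trans_le hκ₁
  have hκinv : 1 / κ ≤ 1 := (div_le_one hκ₀).2 hκ₁
  have hc₀ : 0 ≤ c := hc ▸ sqrt_nonneg _
  have hc_sq : c ^ 2 = 1 - 1 / κ := hc ▸ sq_sqrt (sub_nonneg.2 hκinv)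
  have hc₁ : c < 1 := by nlinarith [one_div_pos.2 hκ₀]
  have h1c : 1 ≤ 2 * κ * (1 - c) := hc ▸ one_le_two_mul_mul_one_sub_sqrt_one_sub_inv (by linarith)
  have hunroll := le_pow_mul_add_sum_of_le_mul_add (sq_nonneg c) (hc_sq ▸ hstep)
  have hvar := sum_sq_pow_mul_le_of_le_add_div_ceil (x := n * (1 - c) / 2) hc₀ hc₁
    (by have := sub_pos.2 hc₁; positivity) ha hb
    (fun t _ => by rw [hnt, Nat.sub_right_comm, mul_div_right_comm]) hσ2
  have hbatch : b / (n * (1 - c) / 2 * (1 - c)) ≤ b * (8 * κ ^ 2 / n) := by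
    rw [div_le_iff₀ (by have := sub_pos.2 hc₁; positivity)]
    calc b ≤ b * (2 * κ * (1 - c)) ^ 2 := le_mul_of_one_le_right hb (one_le_pow₀ h1c)
      _ = b * (8 * κ ^ 2 / n) * (n * (1 - c) / 2 * (1 - c)) := by field_simp; ring
  have hdecay := one_sub_inv_pow_div_two_le_exp hκ₁ (by omega : 2 ≤ n)
  rw [← hT, ← hc_sq] at hdecay
  simp only [mul_div_assoc', ← sum_div] at hunroll
  have hL : L = κ * μ := by rw [hκ]; field_simp
  calc e T ≤ (c ^ 2) ^ T * e 0 + (∑ t ∈ range T, (c ^ 2) ^ (T - 1 - t) * σ2 t) / (2 * L) := hunroll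
    _ ≤ exp (-(n : ℝ) / (6 * κ)) * e 0 + (a / (1 - c ^ 2) + b * (8 * κ ^ 2 / n)) / (2 * L) := by
      gcongr
      · exact he 0
      · rw [hL]; positivity
      · exact hvar.trans (add_le_add_right hbatch _)
    _ = a / (2 * μ) + 4 * κ * b / (μ * n) + e 0 * exp (-(n : ℝ) / (6 * κ)) := by
      rw [hc_sq, sub_sub_cancel, hL]; field_simp; ring
    _ ≤ _ := by gcongr; norm_num
end
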